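/- Let d ≥ 3. Define η ∈ ℝ^{d+1} by η_1 = d−1, η_2 = −1, η_j = −1 for 3 ≤ j ≤ d−1, η_d = η_{d+1} = 0, and define η̃ ∈ ℝ^{d+1} by η̃_1 = −1, η̃_2 = d−1, η̃_j = −1 for 3 ≤ j ≤ d−1, η̃_d = η̃_{d+1} = 0. Then ρ(η) and ρ(η̃) are pure states, and for every ξ ∈ ℝ^{d+1} satisfying the section constraints with 0 < r(ξ) < 1, one has D(ρ(η)‖ρ(ξ)) = D(ρ(η̃)‖ρ(ξ)) if and only if ξ_1 = (d−2)/2. -/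

import Mathlib

open scoped ComplexOrder

open Matrix Finset in
noncomputable def matLog {n : Type*} [Fintype n] [DecidableEq n]
    (A : Matrix n n ℂ) : Matrix n n ℂ := cfc Real.log A

noncomputable def qDiv {n : Type*} [Fintype n] [DecidableEq n]
    (σ ρ : Matrix n n ℂ) : ℝ := (Matrix.trace (σ * (matLog σ - matLog ρ))).re

noncomputable def rho (d : ℕ) (ξ : ℕ → ℝ) : Matrix (Fin d) (Fin d) ℂ :=
  fun i j =>
    if i = j then
      if (i : ℕ) = d - 1 then (((1 - ∑ k ∈ Finset.Icc 1 (d - 1), ξ k) / d : ℝ) : ℂ)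
      else (((ξ ((i : ℕ) + 1) + 1) / d : ℝ) : ℂ)
    else if (i : ℕ) = 0 ∧ (j : ℕ) = 1 then ((ξ d : ℂ) - Complex.I * (ξ (d + 1) : ℂ)) / 2
    else if (i : ℕ) = 1 ∧ (j : ℕ) = 0 then ((ξ d : ℂ) + Complex.I * (ξ (d + 1) : ℂ)) / 2
    else 0

noncomputable def rParam (d : ℕ) (ξ : ℕ → ℝ) : ℝ :=
  Real.sqrt ((ξ 1 - ξ 2) ^ 2 / (d : ℝ) ^ 2 + ξ d ^ 2 + ξ (d + 1) ^ 2)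

noncomputable def lam1 (d : ℕ) (ξ : ℕ → ℝ) : ℝ :=
  (ξ 1 + ξ 2 + 2) / (2 * d) + rParam d ξ / 2

noncomputable def lam2 (d : ℕ) (ξ : ℕ → ℝ) : ℝ :=
  (ξ 1 + ξ 2 + 2) / (2 * d) - rParam d ξ / 2

def SectionConstraints (d : ℕ) (ξ : ℕ → ℝ) : Prop :=
  ξ 1 + ξ 2 = (d : ℝ) - 2 ∧ ∀ j : ℕ, 3 ≤ j → j ≤ d - 1 → ξ j = -1

namespace ExampleOneBisectorAux

open Matrix Finset Polynomial

variable {n : Type*} [Fintype n] [DecidableEq n]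

/-- A matrix supported on the `2 × 2` block indexed by `i0, i1`. -/
def blk (i0 i1 : n) (a b c c' : ℂ) : Matrix n n ℂ :=
  Matrix.of fun i j =>
    if i = i0 ∧ j = i0 then a
    else if i = i1 ∧ j = i1 then b
    else if i = i0 ∧ j = i1 then c
    else if i = i1 ∧ j = i0 then c' else 0

variable {i0 i1 : n}

lemma blk_congr {a a' b b' c c' e e' : ℂ} (h1 : a = a') (h2 : b = b')
    (h3 : c = c') (h4 : e = e') : blk i0 i1 a b c e = blk i0 i1 a' b' c' e' := by
  rw [h1, h2, h3, h4]

lemma blk_mul (h : i0 ≠ i1) (x y z w a b c c' : ℂ) :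
    blk i0 i1 x y z w * blk i0 i1 a b c c' =
      blk i0 i1 (x * a + z * c') (w * c + y * b) (x * c + z * b) (w * a + y * c') := by
  ext i j
  rw [Matrix.mul_apply]
  have key : ∀ k ∈ (Finset.univ : Finset n), k ∉ ({i0, i1} : Finset n) →
      blk i0 i1 x y z w i k * blk i0 i1 a b c c' k j = 0 := by
    intro k _ hk
    simp only [Finset.mem_insert, Finset.mem_singleton, not_or] at hk
    simp [blk, hk.1, hk.2]
  rw [← Finset.sum_subset (Finset.subset_univ ({i0, i1} : Finset n)) key,
    Finset.sum_pair h]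
  have h' : i1 ≠ i0 := Ne.symm h
  by_cases hi0 : i = i0 <;> by_cases hi1 : i = i1 <;>
    by_cases hj0 : j = i0 <;> by_cases hj1 : j = i1 <;>
    simp_all [blk] <;> ring

lemma blk_smul (r : ℂ) (a b c c' : ℂ) :
    r • blk i0 i1 a b c c' = blk i0 i1 (r * a) (r * b) (r * c) (r * c') := by
  ext i j
  simp only [blk, Matrix.smul_apply, Matrix.of_apply, smul_eq_mul]
  split_ifs <;> simp

lemma blk_add (a b c c' a' b' e e' : ℂ) :
    blk i0 i1 a b c c' + blk i0 i1 a' b' e e' =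
      blk i0 i1 (a + a') (b + b') (c + e) (c' + e') := by
  ext i j
  simp only [blk, Matrix.add_apply, Matrix.of_apply]
  split_ifs <;> simp

lemma blk_sub (a b c c' a' b' e e' : ℂ) :
    blk i0 i1 a b c c' - blk i0 i1 a' b' e e' =
      blk i0 i1 (a - a') (b - b') (c - e) (c' - e') := by
  ext i j
  simp only [blk, Matrix.sub_apply, Matrix.of_apply]
  split_ifs <;> simp

lemma blk_neg (a b c c' : ℂ) :
    -blk i0 i1 a b c c' = blk i0 i1 (-a) (-b) (-c) (-c') := by
  ext i j
  simp only [blk, Matrix.neg_apply, Matrix.of_apply]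
  split_ifs <;> simp

lemma blk_trace (h : i0 ≠ i1) (a b c c' : ℂ) :
    Matrix.trace (blk i0 i1 a b c c') = a + b := by
  rw [Matrix.trace]
  have key : ∀ k ∈ (Finset.univ : Finset n), k ∉ ({i0, i1} : Finset n) →
      Matrix.diag (blk i0 i1 a b c c') k = 0 := by
    intro k _ hk
    simp only [Finset.mem_insert, Finset.mem_singleton, not_or] at hk
    simp [blk, Matrix.diag, hk.1, hk.2]
  rw [← Finset.sum_subset (Finset.subset_univ ({i0, i1} : Finset n)) key,
    Finset.sum_pair h]
  simp [blk, Matrix.diag, h, h.symm]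

lemma blk_isSelfAdjoint (h : i0 ≠ i1) {a b c c' : ℂ}
    (ha : star a = a) (hb : star b = b) (hc : star c = c') :
    IsSelfAdjoint (blk i0 i1 a b c c') := by
  have hc' : star c' = c := by rw [← hc, star_star]
  show star _ = _
  ext i j
  rw [Matrix.star_apply]
  simp only [blk, Matrix.of_apply]
  by_cases hi0 : i = i0 <;> by_cases hi1 : i = i1 <;>
    by_cases hj0 : j = i0 <;> by_cases hj1 : j = i1 <;>
    simp_all

lemma real_smul_matrix (r : ℝ) (X : Matrix n n ℂ) :
    r • X = (r : ℂ) • X := by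
  ext i j
  simp [Matrix.smul_apply, Complex.real_smul]

lemma spectrum_cubic [Nonempty n] {A : Matrix n n ℂ} {s p l1 l2 : ℝ}
    (hs : l1 + l2 = s) (hp : l1 * l2 = p)
    (hA : A * A * A = s • (A * A) - p • A) :
    spectrum ℝ A ⊆ {0, l1, l2} := by
  intro x hx
  set q : ℝ[X] := X ^ 3 - C s * X ^ 2 + C p * X with hq
  have h0 : Polynomial.aeval A q = 0 := by
    have h3 : A ^ 3 = A * A * A := by rw [pow_succ, sq]
    have h2 : A ^ 2 = A * A := sq A
    simp only [hq, map_add, map_sub, _root_.map_mul, aeval_X_pow, aeval_C, aeval_X]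
    rw [h3, h2, hA, ← Algebra.smul_def, ← Algebra.smul_def]
    abel
  have hmem := spectrum.subset_polynomial_aeval A q ⟨x, hx, rfl⟩
  rw [h0, spectrum.zero_eq] at hmem
  have hev : x ^ 3 - s * x ^ 2 + p * x = 0 := by
    simpa [hq] using hmem
  have hfac : x * (x - l1) * (x - l2) = 0 := by
    linear_combination hev - x ^ 2 * hs + x * hp
  rcases mul_eq_zero.mp hfac with h | h
  · rcases mul_eq_zero.mp h with h | h
    · exact Or.inl h
    · exact Or.inr (Or.inl (sub_eq_zero.mp h))
  · exact Or.inr (Or.inr (sub_eq_zero.mp h))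

lemma spectrum_quadratic [Nonempty n] {A : Matrix n n ℂ}
    (hA : A * A = A) : spectrum ℝ A ⊆ {0, 1} := by
  intro x hx
  set q : ℝ[X] := X ^ 2 - X with hq
  have h0 : Polynomial.aeval A q = 0 := by
    simp only [hq, map_sub, aeval_X_pow, aeval_X]
    rw [sq, hA, sub_self]
  have hmem := spectrum.subset_polynomial_aeval A q ⟨x, hx, rfl⟩
  rw [h0, spectrum.zero_eq] at hmem
  have hev : x ^ 2 - x = 0 := by simpa [hq] using hmem
  have hfac : x * (x - 1) = 0 := by linear_combination hev
  rcases mul_eq_zero.mp hfac with h | h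
  · exact Or.inl h
  · exact Or.inr (sub_eq_zero.mp h)

lemma matLog_of_proj {A : Matrix n n ℂ} (hA : IsSelfAdjoint A)
    (hsp : spectrum ℝ A ⊆ ({0, 1} : Set ℝ)) : matLog A = 0 := by
  rw [matLog]
  have h1 : cfc Real.log A = cfc (fun _ : ℝ => (0 : ℝ)) A := by
    refine cfc_congr fun x hx => ?_
    have hx' : x = 0 ∨ x = 1 := by
      simpa [Set.mem_insert_iff, Set.mem_singleton_iff] using hsp hx
    rcases hx' with h | h <;> simp [h]
  rw [h1, show (fun _ : ℝ => (0 : ℝ)) = (0 : ℝ → ℝ) from rfl, cfc_zero]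

lemma matLog_eq_poly {A : Matrix n n ℂ} (hA : IsSelfAdjoint A) {l1 l2 al be : ℝ}
    (h2 : 0 < l2) (h12 : l2 < l1)
    (ha1 : al * l1 + be * l1 ^ 2 = Real.log l1)
    (ha2 : al * l2 + be * l2 ^ 2 = Real.log l2)
    (hsp : spectrum ℝ A ⊆ ({0, l1, l2} : Set ℝ)) :
    matLog A = al • A + be • (A * A) := by
  rw [matLog]
  have h1 : cfc Real.log A = cfc (fun x : ℝ => al * x + be * x ^ 2) A := by
    refine cfc_congr fun x hx => ?_
    have hx' : x = 0 ∨ x = l1 ∨ x = l2 := by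
      simpa [Set.mem_insert_iff, Set.mem_singleton_iff] using hsp hx
    rcases hx' with h | h | h
    · simp [h]
    · subst h; rw [← ha1]
    · subst h; rw [← ha2]
  rw [h1, cfc_add (a := A) (fun x : ℝ => al * x) (fun x : ℝ => be * x ^ 2)
    (by fun_prop) (by fun_prop)]
  rw [show (fun x : ℝ => al * x) = (al * ·) from rfl, cfc_const_mul_id al A hA]
  rw [cfc_const_mul be (fun x : ℝ => x ^ 2) A (by fun_prop),
    show (fun x : ℝ => x ^ 2) = (· ^ 2 : ℝ → ℝ) from rfl, cfc_pow_id A 2 hA, sq]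

lemma sum_Icc_eq (d : ℕ) (hd : 3 ≤ d) (ξ : ℕ → ℝ)
    (hc : SectionConstraints d ξ) : ∑ k ∈ Finset.Icc 1 (d - 1), ξ k = 1 := by
  obtain ⟨h12, hj⟩ := hc
  have hset : Finset.Icc 1 (d - 1) = insert 1 (insert 2 (Finset.Icc 3 (d - 1))) := by
    ext k
    simp only [Finset.mem_Icc, Finset.mem_insert]
    omega
  rw [hset, Finset.sum_insert (by simp only [Finset.mem_insert, Finset.mem_Icc]; omega),
    Finset.sum_insert (by simp only [Finset.mem_Icc]; omega)]
  have hconst : ∑ k ∈ Finset.Icc 3 (d - 1), ξ k = ∑ _k ∈ Finset.Icc 3 (d - 1), (-1 : ℝ) := by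
    refine Finset.sum_congr rfl fun j hjm => ?_
    rw [Finset.mem_Icc] at hjm
    exact hj j hjm.1 hjm.2
  rw [hconst, Finset.sum_const, Nat.card_Icc]
  have hcard : d - 1 + 1 - 3 = d - 3 := by omega
  rw [hcard, nsmul_eq_mul]
  have : ((d - 3 : ℕ) : ℝ) = (d : ℝ) - 3 := by
    rw [Nat.cast_sub (by omega)]
    norm_num
  rw [this]
  linarith

def fin0 (d : ℕ) (hd : 3 ≤ d) : Fin d := ⟨0, by omega⟩
def fin1 (d : ℕ) (hd : 3 ≤ d) : Fin d := ⟨1, by omega⟩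

lemma fin0_ne_fin1 (d : ℕ) (hd : 3 ≤ d) : fin0 d hd ≠ fin1 d hd := by
  simp [fin0, fin1, Fin.ext_iff]

lemma rho_eq (d : ℕ) (hd : 3 ≤ d) (ξ : ℕ → ℝ) (hc : SectionConstraints d ξ) :
    rho d ξ = blk (fin0 d hd) (fin1 d hd)
      (((ξ 1 + 1) / d : ℝ) : ℂ) (((ξ 2 + 1) / d : ℝ) : ℂ)
      (((ξ d : ℂ) - Complex.I * (ξ (d + 1) : ℂ)) / 2)
      (((ξ d : ℂ) + Complex.I * (ξ (d + 1) : ℂ)) / 2) := by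
  have hsum := sum_Icc_eq d hd ξ hc
  obtain ⟨h12, hj⟩ := hc
  ext i j
  have hi := i.isLt
  have hjlt := j.isLt
  simp only [rho, blk, Matrix.of_apply, fin0, fin1, Fin.ext_iff]
  by_cases hij : (i : ℕ) = (j : ℕ)
  · have hij' : i = j := Fin.ext hij
    subst hij'
    rw [if_pos rfl]
    by_cases hd1 : (i : ℕ) = d - 1
    · rw [if_pos hd1, hsum, if_neg (by omega), if_neg (by omega), if_neg (by omega),
        if_neg (by omega)]
      norm_num
    · rw [if_neg hd1]
      by_cases h0 : (i : ℕ) = 0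
      · rw [if_pos (show (i : ℕ) = 0 ∧ (i : ℕ) = 0 from ⟨h0, h0⟩), h0]
      · by_cases h1 : (i : ℕ) = 1
        · rw [if_neg (by omega), if_pos (show (i : ℕ) = 1 ∧ (i : ℕ) = 1 from ⟨h1, h1⟩), h1]
        · rw [if_neg (by omega), if_neg (by omega), if_neg (by omega), if_neg (by omega),
            hj ((i : ℕ) + 1) (by omega) (by omega)]
          norm_num
  · rw [if_neg hij]
    by_cases h01 : (i : ℕ) = 0 ∧ (j : ℕ) = 1
    · obtain ⟨a0, b1⟩ := h01
      simp [a0, b1]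
    · by_cases h10 : (i : ℕ) = 1 ∧ (j : ℕ) = 0
      · obtain ⟨a1, b0⟩ := h10
        simp [a1, b0]
      · rw [if_neg h01, if_neg h10,
          if_neg (show ¬((i : ℕ) = 0 ∧ (j : ℕ) = 0) by omega),
          if_neg (show ¬((i : ℕ) = 1 ∧ (j : ℕ) = 1) by omega)]


lemma blk_diag0 (h : i0 ≠ i1) :
    blk i0 i1 (1 : ℂ) 0 0 0 = Matrix.diagonal (fun i => if i = i0 then (1 : ℂ) else 0) := by
  ext i j
  rw [Matrix.diagonal_apply]
  simp only [blk, Matrix.of_apply]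
  by_cases h1 : i = i0 <;> by_cases h2 : j = i0 <;> by_cases h3 : i = i1 <;>
    by_cases h4 : j = i1 <;> by_cases h5 : i = j <;> simp_all

lemma blk_diag1 (h : i0 ≠ i1) :
    blk i0 i1 (0 : ℂ) 1 0 0 = Matrix.diagonal (fun i => if i = i1 then (1 : ℂ) else 0) := by
  ext i j
  rw [Matrix.diagonal_apply]
  simp only [blk, Matrix.of_apply]
  by_cases h1 : i = i0 <;> by_cases h2 : j = i0 <;> by_cases h3 : i = i1 <;>
    by_cases h4 : j = i1 <;> by_cases h5 : i = j <;> simp_all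

lemma diag_ind_posSemidef {m : Type*} [Fintype m] [DecidableEq m] (i0 : m) :
    (Matrix.diagonal (fun i => if i = i0 then (1 : ℂ) else 0)).PosSemidef := by
  refine Matrix.posSemidef_diagonal_iff.mpr fun i => ?_
  split_ifs
  · exact zero_le_one
  · exact le_refl 0

lemma diag_ind_rank {m : Type*} [Fintype m] [DecidableEq m] (i0 : m) :
    (Matrix.diagonal (fun i => if i = i0 then (1 : ℂ) else 0)).rank = 1 := by
  rw [Matrix.rank_diagonal]
  have hiff : ∀ i : m, ((if i = i0 then (1 : ℂ) else 0) ≠ 0) ↔ i = i0 := by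
    intro i
    split_ifs with h <;> simp [h]
  rw [Fintype.card_congr (Equiv.subtypeEquivRight hiff), Fintype.card_subtype_eq]

end ExampleOneBisectorAux

set_option maxHeartbeats 2000000 in
open ExampleOneBisectorAux Matrix in
theorem example_one_bisector (d : ℕ) (hd : 3 ≤ d) (η η' : ℕ → ℝ)
    (hη1 : η 1 = (d : ℝ) - 1) (hη2 : η 2 = -1)
    (hηj : ∀ j : ℕ, 3 ≤ j → j ≤ d - 1 → η j = -1)
    (hηd : η d = 0) (hηd1 : η (d + 1) = 0)
    (hη'1 : η' 1 = -1) (hη'2 : η' 2 = (d : ℝ) - 1)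
    (hη'j : ∀ j : ℕ, 3 ≤ j → j ≤ d - 1 → η' j = -1)
    (hη'd : η' d = 0) (hη'd1 : η' (d + 1) = 0) :
    ((rho d η).PosSemidef ∧ (rho d η).rank = 1) ∧
    ((rho d η').PosSemidef ∧ (rho d η').rank = 1) ∧
    ∀ ξ : ℕ → ℝ, SectionConstraints d ξ → 0 < rParam d ξ → rParam d ξ < 1 →
      (qDiv (rho d η) (rho d ξ) = qDiv (rho d η') (rho d ξ) ↔
        ξ 1 = ((d : ℝ) - 2) / 2) := by
  haveI : Nonempty (Fin d) := ⟨fin0 d hd⟩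
  have hd0 : (d : ℝ) ≠ 0 := Nat.cast_ne_zero.mpr (by omega)
  set i0 := fin0 d hd with hi0def
  set i1 := fin1 d hd with hi1def
  have h01 : i0 ≠ i1 := fin0_ne_fin1 d hd
  have hcη : SectionConstraints d η := ⟨by rw [hη1, hη2]; ring, hηj⟩
  have hcη' : SectionConstraints d η' := ⟨by rw [hη'1, hη'2]; ring, hη'j⟩
  have hη_eq : rho d η = blk i0 i1 1 0 0 0 := by
    rw [rho_eq d hd η hcη]
    refine blk_congr ?_ ?_ ?_ ?_
    · rw [hη1]; push_cast; field_simp; ring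
    · rw [hη2]; norm_num
    · rw [hηd, hηd1]; norm_num
    · rw [hηd, hηd1]; norm_num
  have hη'_eq : rho d η' = blk i0 i1 0 1 0 0 := by
    rw [rho_eq d hd η' hcη']
    refine blk_congr ?_ ?_ ?_ ?_
    · rw [hη'1]; norm_num
    · rw [hη'2]; push_cast; field_simp; ring
    · rw [hη'd, hη'd1]; norm_num
    · rw [hη'd, hη'd1]; norm_num
  have hσ2 : blk i0 i1 (1 : ℂ) 0 0 0 * blk i0 i1 (1 : ℂ) 0 0 0 = blk i0 i1 (1 : ℂ) 0 0 0 := by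
    rw [blk_mul h01]
    exact blk_congr (by ring) (by ring) (by ring) (by ring)
  have hσ'2 : blk i0 i1 (0 : ℂ) 1 0 0 * blk i0 i1 (0 : ℂ) 1 0 0 = blk i0 i1 (0 : ℂ) 1 0 0 := by
    rw [blk_mul h01]
    exact blk_congr (by ring) (by ring) (by ring) (by ring)
  have hσsa : IsSelfAdjoint (blk i0 i1 (1 : ℂ) 0 0 0) :=
    blk_isSelfAdjoint h01 (by simp) (by simp) (by simp)
  have hσ'sa : IsSelfAdjoint (blk i0 i1 (0 : ℂ) 1 0 0) :=
    blk_isSelfAdjoint h01 (by simp) (by simp) (by simp)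
  have hσlog : matLog (blk i0 i1 (1 : ℂ) 0 0 0) = 0 :=
    matLog_of_proj hσsa (spectrum_quadratic hσ2)
  have hσ'log : matLog (blk i0 i1 (0 : ℂ) 1 0 0) = 0 :=
    matLog_of_proj hσ'sa (spectrum_quadratic hσ'2)
  refine ⟨⟨?_, ?_⟩, ⟨?_, ?_⟩, ?_⟩
  · rw [hη_eq, blk_diag0 h01]; exact diag_ind_posSemidef i0
  · rw [hη_eq, blk_diag0 h01]; exact diag_ind_rank i0
  · rw [hη'_eq, blk_diag1 h01]; exact diag_ind_posSemidef i1
  · rw [hη'_eq, blk_diag1 h01]; exact diag_ind_rank i1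
  intro ξ hcξ hr0 hr1
  have h12 : ξ 1 + ξ 2 = (d : ℝ) - 2 := hcξ.1
  have hAeq := rho_eq d hd ξ hcξ
  set r := rParam d ξ with hrdef
  have hr2 : r ^ 2 = (ξ 1 - ξ 2) ^ 2 / (d : ℝ) ^ 2 + ξ d ^ 2 + ξ (d + 1) ^ 2 := by
    rw [hrdef, rParam]
    exact Real.sq_sqrt (by positivity)
  set l1 : ℝ := 1 / 2 + r / 2 with hl1def
  set l2 : ℝ := 1 / 2 - r / 2 with hl2def
  have hl2pos : 0 < l2 := by rw [hl2def]; linarith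
  have hl12 : l2 < l1 := by rw [hl1def, hl2def]; linarith
  have hl1pos : 0 < l1 := lt_trans hl2pos hl12
  have hsum1 : l1 + l2 = 1 := by rw [hl1def, hl2def]; ring
  set a : ℝ := (ξ 1 + 1) / d with hadef
  set b : ℝ := (ξ 2 + 1) / d with hbdef
  set c : ℂ := ((ξ d : ℂ) - Complex.I * (ξ (d + 1) : ℂ)) / 2 with hcdef
  set c' : ℂ := ((ξ d : ℂ) + Complex.I * (ξ (d + 1) : ℂ)) / 2 with hc'def
  set νR : ℝ := (ξ d ^ 2 + ξ (d + 1) ^ 2) / 4 with hνdef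
  have hν : c * c' = ((νR : ℝ) : ℂ) := by
    rw [hcdef, hc'def, hνdef]
    push_cast
    linear_combination (-((ξ (d + 1) : ℂ) ^ 2) / 4) * Complex.I_sq
  have hsR : a + b = l1 + l2 := by
    rw [hadef, hbdef, hsum1]
    field_simp
    linarith
  have hpR : a * b - νR = l1 * l2 := by
    have hx2 : ξ 2 = (d : ℝ) - 2 - ξ 1 := by linarith
    have hll : l1 * l2 = 1 / 4 - r ^ 2 / 4 := by rw [hl1def, hl2def]; ring
    rw [hadef, hbdef, hνdef, hll, hr2, hx2]
    field_simp
    ring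
  have hsC : (a : ℂ) + (b : ℂ) = (l1 : ℂ) + (l2 : ℂ) := by
    have := congrArg (fun t : ℝ => (t : ℂ)) hsR
    push_cast at this
    exact this
  have hpC : (a : ℂ) * (b : ℂ) - c * c' = (l1 : ℂ) * (l2 : ℂ) := by
    rw [hν]
    have := congrArg (fun t : ℝ => (t : ℂ)) hpR
    push_cast at this
    exact this
  have hJA : blk i0 i1 (1 : ℂ) 1 0 0 * blk i0 i1 (a : ℂ) (b : ℂ) c c'
      = blk i0 i1 (a : ℂ) (b : ℂ) c c' := by
    rw [blk_mul h01]
    exact blk_congr (by ring) (by ring) (by ring) (by ring)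
  have hM2 : blk i0 i1 (a : ℂ) (b : ℂ) c c' * blk i0 i1 (a : ℂ) (b : ℂ) c c' =
      ((l1 : ℂ) + (l2 : ℂ)) • blk i0 i1 (a : ℂ) (b : ℂ) c c'
        - ((l1 : ℂ) * (l2 : ℂ)) • blk i0 i1 (1 : ℂ) 1 0 0 := by
    rw [blk_mul h01, blk_smul, blk_smul, blk_sub]
    exact blk_congr (by linear_combination (a : ℂ) * hsC - hpC)
      (by linear_combination (b : ℂ) * hsC - hpC)
      (by linear_combination c * hsC) (by linear_combination c' * hsC)
  have hcast1 : ((l1 + l2 : ℝ) : ℂ) = (l1 : ℂ) + (l2 : ℂ) := by push_cast; ring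
  have hcast2 : ((l1 * l2 : ℝ) : ℂ) = (l1 : ℂ) * (l2 : ℂ) := by push_cast; ring
  have hcube : blk i0 i1 (a : ℂ) (b : ℂ) c c' * blk i0 i1 (a : ℂ) (b : ℂ) c c'
      * blk i0 i1 (a : ℂ) (b : ℂ) c c' =
      (l1 + l2) • (blk i0 i1 (a : ℂ) (b : ℂ) c c' * blk i0 i1 (a : ℂ) (b : ℂ) c c')
        - (l1 * l2) • blk i0 i1 (a : ℂ) (b : ℂ) c c' := by
    calc blk i0 i1 (a : ℂ) (b : ℂ) c c' * blk i0 i1 (a : ℂ) (b : ℂ) c c'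
        * blk i0 i1 (a : ℂ) (b : ℂ) c c'
        = (((l1 : ℂ) + (l2 : ℂ)) • blk i0 i1 (a : ℂ) (b : ℂ) c c'
            - ((l1 : ℂ) * (l2 : ℂ)) • blk i0 i1 (1 : ℂ) 1 0 0)
            * blk i0 i1 (a : ℂ) (b : ℂ) c c' := by rw [← hM2]
      _ = ((l1 : ℂ) + (l2 : ℂ)) • (blk i0 i1 (a : ℂ) (b : ℂ) c c'
            * blk i0 i1 (a : ℂ) (b : ℂ) c c')
            - ((l1 : ℂ) * (l2 : ℂ)) • (blk i0 i1 (1 : ℂ) 1 0 0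
            * blk i0 i1 (a : ℂ) (b : ℂ) c c') := by
          rw [Matrix.sub_mul, Matrix.smul_mul, Matrix.smul_mul]
      _ = _ := by
          rw [hJA, real_smul_matrix (l1 + l2), real_smul_matrix (l1 * l2), hcast1, hcast2]
  have hspec : spectrum ℝ (blk i0 i1 (a : ℂ) (b : ℂ) c c') ⊆ ({0, l1, l2} : Set ℝ) :=
    spectrum_cubic rfl rfl hcube
  have hstar : star c = c' := by
    rw [hcdef, hc'def]
    simp only [Complex.star_def, map_div₀, map_sub, _root_.map_mul, Complex.conj_ofReal,
      Complex.conj_I, map_ofNat]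
    ring
  have hMsa : IsSelfAdjoint (blk i0 i1 (a : ℂ) (b : ℂ) c c') :=
    blk_isSelfAdjoint h01 (by simp [Complex.star_def, Complex.conj_ofReal])
      (by simp [Complex.star_def, Complex.conj_ofReal]) hstar
  set lg1 := Real.log l1 with hlg1def
  set lg2 := Real.log l2 with hlg2def
  set be : ℝ := (lg1 / l1 - lg2 / l2) / (l1 - l2) with hbedef
  set al : ℝ := lg1 / l1 - be * l1 with haldef
  have hne12 : l1 - l2 ≠ 0 := sub_ne_zero.mpr (ne_of_gt hl12)
  have ha1 : al * l1 + be * l1 ^ 2 = lg1 := by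
    rw [haldef]
    field_simp
    ring
  have ha2 : al * l2 + be * l2 ^ 2 = lg2 := by
    rw [haldef, hbedef]
    field_simp
    ring
  have hlog : matLog (blk i0 i1 (a : ℂ) (b : ℂ) c c') =
      al • blk i0 i1 (a : ℂ) (b : ℂ) c c'
        + be • (blk i0 i1 (a : ℂ) (b : ℂ) c c' * blk i0 i1 (a : ℂ) (b : ℂ) c c') :=
    matLog_eq_poly hMsa hl2pos hl12 ha1 ha2 hspec
  have hMM := blk_mul h01 (a : ℂ) (b : ℂ) c c' (a : ℂ) (b : ℂ) c c'
  have htr1 : Matrix.trace (blk i0 i1 (1 : ℂ) 0 0 0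
      * (0 - matLog (blk i0 i1 (a : ℂ) (b : ℂ) c c'))) =
      ((-(al * a + be * (a * a + νR)) : ℝ) : ℂ) := by
    rw [hlog, hMM, real_smul_matrix al, real_smul_matrix be, blk_smul, blk_smul, blk_add,
      zero_sub, Matrix.mul_neg, Matrix.trace_neg, blk_mul h01, blk_trace h01]
    push_cast
    linear_combination -(be : ℂ) * hν
  have htr2 : Matrix.trace (blk i0 i1 (0 : ℂ) 1 0 0
      * (0 - matLog (blk i0 i1 (a : ℂ) (b : ℂ) c c'))) =
      ((-(al * b + be * (b * b + νR)) : ℝ) : ℂ) := by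
    rw [hlog, hMM, real_smul_matrix al, real_smul_matrix be, blk_smul, blk_smul, blk_add,
      zero_sub, Matrix.mul_neg, Matrix.trace_neg, blk_mul h01, blk_trace h01]
    push_cast
    linear_combination -(be : ℂ) * hν
  have hq1 : qDiv (rho d η) (rho d ξ) = -(al * a + be * (a * a + νR)) := by
    rw [qDiv, hη_eq, hAeq, hσlog, htr1, Complex.ofReal_re]
  have hq2 : qDiv (rho d η') (rho d ξ) = -(al * b + be * (b * b + νR)) := by
    rw [qDiv, hη'_eq, hAeq, hσ'log, htr2, Complex.ofReal_re]
  have habs : a + b = 1 := hsR.trans hsum1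
  have hlg : lg2 < lg1 := Real.log_lt_log hl2pos hl12
  have h5 : (al + be) * (l1 - l2) = lg1 - lg2 := by
    linear_combination ha1 - ha2 - be * (l1 - l2) * hsum1
  have hABpos : 0 < al + be := by
    have hprod : 0 < (al + be) * (l1 - l2) := by rw [h5]; linarith
    rcases mul_pos_iff.mp hprod with ⟨h6, _⟩ | ⟨_, h7⟩
    · exact h6
    · linarith
  rw [hq1, hq2]
  constructor
  · intro hEq
    have h0 : (a - b) * (al + be) = 0 := by
      linear_combination -hEq - be * (a - b) * habs
    have hab : a = b := by
      rcases mul_eq_zero.mp h0 with h | h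
      · linarith [sub_eq_zero.mp h]
      · linarith
    have hξ12 : ξ 1 = ξ 2 := by
      rw [hadef, hbdef] at hab
      field_simp at hab
      linarith
    linarith
  · intro h1
    have hξ2 : ξ 2 = ξ 1 := by linarith
    have hab : a = b := by rw [hadef, hbdef, hξ2]
    rw [hab]
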